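/- Suppose d_{−β}(1) begins 2 1^k 2 with k ≥ 2 even, and set n = k+1. Define the sliding block code π : Σ_{−β} → {1,2}^ℕ by (π(x))_j = 1 if x_j⋯x_{j+n−1} = 1^n and (π(x))_j = 2 otherwise. Then for every x ∈ Σ_{−β}: if (π(x))_j = 2 for some j, then (π(x))_m = 2 for all m ≥ j; consequently π(Σ_{−β}) ⊆ {1^∞} ∪ {1^m 2^∞ : m ≥ 1} ∪ {2^∞}. -/
import Mathlib


noncomputable def Tneg (β : ℝ) : ℝ → ℝ := fun y => -β * y + ⌊β * y⌋ + 1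

noncomputable def dExp (β : ℝ) (x : ℝ) : ℕ → ℕ :=
  fun i => (⌊β * ((Tneg β)^[i] x)⌋).toNat + 1

def altLt (x y : ℕ → ℕ) : Prop :=
  ∃ j : ℕ, (∀ k < j, x k = y k) ∧ (-1 : ℤ) ^ (j + 1) * ((y j : ℤ) - (x j : ℤ)) < 0

def altLe (x y : ℕ → ℕ) : Prop := x = y ∨ altLt x y

def shift (x : ℕ → ℕ) : ℕ → ℕ := fun n => x (n + 1)

/-- The (−β)-shift via the alternating-order characterization, alphabet `{1,2}`. -/
noncomputable def SigmaOrd (β : ℝ) : Set (ℕ → ℕ) :=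
  {x | (∀ m, x m = 1 ∨ x m = 2) ∧ ∀ m, altLe (shift^[m] x) (dExp β 1)}

open scoped Classical in
/-- The sliding block code: `(π x)_j = 1` iff `x_j ⋯ x_{j+n−1} = 1^n`. -/
noncomputable def piMap (n : ℕ) (x : ℕ → ℕ) : ℕ → ℕ :=
  fun j => if ∀ i < n, x (j + i) = 1 then 1 else 2

def Xset : Set (ℕ → ℕ) :=
  {x | x = (fun _ => 1) ∨ x = (fun _ => 2) ∨
    ∃ m : ℕ, 1 ≤ m ∧ x = fun i => if i < m then 1 else 2}

lemma shift_iter (x : ℕ → ℕ) (m n : ℕ) : shift^[m] x n = x (n + m) := by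
  induction m generalizing x n with
  | zero => simp
  | succ m ih =>
    rw [Function.iterate_succ_apply, ih]
    simp only [shift]
    rfl

lemma piMap_one_or_two (n : ℕ) (x : ℕ → ℕ) (j : ℕ) :
    piMap n x j = 1 ∨ piMap n x j = 2 := by
  unfold piMap
  split <;> simp

theorem piMap_image_in_Xset (β : ℝ) (hβ : 1 < β) (k : ℕ) (hk : 2 ≤ k)
    (hkeven : Even k)
    (h0 : dExp β 1 0 = 2) (h1 : ∀ i, 1 ≤ i → i ≤ k → dExp β 1 i = 1)
    (h2 : dExp β 1 (k + 1) = 2)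
    (x : ℕ → ℕ) (hx : x ∈ SigmaOrd β) :
    (∀ j, piMap (k + 1) x j = 2 → ∀ m ≥ j, piMap (k + 1) x m = 2) ∧
      piMap (k + 1) x ∈ Xset := by
  obtain ⟨hx12, hxle⟩ := hx
  have step : ∀ j, piMap (k + 1) x j = 2 → piMap (k + 1) x (j + 1) = 2 := by
    intro j hj
    by_contra hne
    have hcond : ∀ i < k + 1, x (j + 1 + i) = 1 := by
      by_contra h
      simp only [piMap, if_neg h] at hne
      exact hne trivial
    -- x j = 2
    have hj0 : x j = 2 := by
      have hnot : ¬ ∀ i < k + 1, x (j + i) = 1 := by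
        intro h
        simp only [piMap, if_pos h] at hj
        omega
      push_neg at hnot
      obtain ⟨i, hi, hxi⟩ := hnot
      rcases Nat.eq_zero_or_pos i with h0' | hpos
      · subst h0'
        rcases hx12 j with h | h
        · exact absurd (by simpa using h) hxi
        · exact h
      · exfalso
        have hc := hcond (i - 1) (by omega)
        have e : j + 1 + (i - 1) = j + i := by omega
        rw [e] at hc
        exact hxi hc
    have hyv : ∀ i, shift^[j] x i = x (i + j) := fun i => shift_iter x j i
    have hy1 : ∀ i, 1 ≤ i → i ≤ k + 1 → shift^[j] x i = 1 := by
      intro i hi1 hi2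
      rw [hyv]
      have hc := hcond (i - 1) (by omega)
      have e : j + 1 + (i - 1) = i + j := by omega
      rw [e] at hc
      exact hc
    rcases hxle j with heq | ⟨j', hagree, hsign⟩
    · have := congrFun heq (k + 1)
      rw [hy1 (k + 1) (by omega) le_rfl, h2] at this
      omega
    · rcases lt_trichotomy j' (k + 1) with hlt | heqj | hgt
      · -- agreement at j' forces the sign expression to be zero
        have hval : shift^[j] x j' = dExp β 1 j' := by
          rcases Nat.eq_zero_or_pos j' with h0' | hpos
          · subst h0'
            rw [hyv]
            simpa [h0] using hj0
          · rw [hy1 j' hpos (by omega), h1 j' hpos (by omega)]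
        rw [hval] at hsign
        simp at hsign
      · subst heqj
        rw [hy1 (k + 1) (by omega) le_rfl, h2] at hsign
        have : Even (k + 1 + 1) := by
          obtain ⟨t, ht⟩ := hkeven
          exact ⟨t + 1, by omega⟩
        rw [this.neg_one_pow] at hsign
        norm_num at hsign
      · have := hagree (k + 1) hgt
        rw [hy1 (k + 1) (by omega) le_rfl, h2] at this
        omega
  have stepAll : ∀ j, piMap (k + 1) x j = 2 → ∀ m ≥ j, piMap (k + 1) x m = 2 := by
    intro j hj m hm
    obtain ⟨t, rfl⟩ := Nat.exists_eq_add_of_le hm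
    clear hm
    induction t with
    | zero => exact hj
    | succ t ih => exact step (j + t) ih
  refine ⟨stepAll, ?_⟩
  by_cases hall : ∀ j, piMap (k + 1) x j = 1
  · exact Or.inl (funext hall)
  · push_neg at hall
    have hP : ∃ j, piMap (k + 1) x j = 2 := by
      obtain ⟨j, hj⟩ := hall
      exact ⟨j, (piMap_one_or_two (k + 1) x j).resolve_left hj⟩
    set m := Nat.find hP with hm
    have hPm : piMap (k + 1) x m = 2 := Nat.find_spec hP
    have hmin : ∀ i < m, piMap (k + 1) x i = 1 := by
      intro i hi
      have := Nat.find_min hP hi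
      exact (piMap_one_or_two (k + 1) x i).resolve_right this
    rcases Nat.eq_zero_or_pos m with h0' | hpos
    · refine Or.inr (Or.inl (funext fun i => ?_))
      exact stepAll m hPm i (by omega)
    · refine Or.inr (Or.inr ⟨m, hpos, funext fun i => ?_⟩)
      by_cases hi : i < m
      · simp [hi, hmin i hi]
      · simp only [if_neg hi]
        exact stepAll m hPm i (by omega)
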